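/- arXiv:2010.01501 — 2 statements merged into one kernel-verified Lean document; each statement's English description precedes it below -/
import Mathlib

section
/- Let I be a finite set, and for each i ∈ I let 𝒰ᵢ be a set of infinite-dimensional Banach spaces and Xᵢ a 𝒰ᵢ-subprojective Banach space. Then the direct sum ⊕_{i∈I} Xᵢ (with the max norm) is 𝒰-subprojective, where 𝒰 = ⋃_{i∈I} 𝒰ᵢ. -/
open Filter Topology

/-- A Banach space `E` is `𝒰`-subprojective for the family `Z`: every infinite-dimensional
closed subspace contains an infinite-dimensional closed subspace which is complemented in `E`
and isomorphic to a member of the family. -/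
def USubprojN (E : Type*) [NormedAddCommGroup E] [NormedSpace ℝ E]
    {κ : Type*} (Z : κ → Type*) [∀ k, NormedAddCommGroup (Z k)]
    [∀ k, NormedSpace ℝ (Z k)] : Prop :=
  ∀ V : Submodule ℝ E, IsClosed (V : Set E) → ¬ FiniteDimensional ℝ V →
    ∃ W : Submodule ℝ E, W ≤ V ∧ IsClosed (W : Set E) ∧ ¬ FiniteDimensional ℝ W ∧
      (∃ P : E →L[ℝ] E, LinearMap.range (P : E →ₗ[ℝ] E) = W ∧ ∀ x ∈ W, P x = x) ∧
      ∃ k, Nonempty (↥W ≃L[ℝ] Z k)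

/-!
If some coordinate projection `πᵢ` is an isomorphism on an infinite-dimensional subspace `M` of
`V`, it maps the closure of `M` isomorphically onto a closed infinite-dimensional subspace of `Xᵢ`,
and the complemented copy of a member of `𝒰ᵢ` found there pulls back along `πᵢ` to one inside `V`.
Otherwise no `πᵢ` is an isomorphism on an infinite-dimensional subspace of `V`; a Mazur-type basic
sequence then gives, one coordinate after the other, an infinite-dimensional subspace on which
`‖πᵢ x‖ ≤ ‖x‖ / 2` for every `i`, which is impossible for the max norm.
-/

open Metric Finset

section FiniteCodimension

variable {E : Type*} [NormedAddCommGroup E] [NormedSpace ℝ E]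

theorem not_finiteDimensional_inf_of_finiteDimensional_quotient {M K : Submodule ℝ E}
    (hM : ¬FiniteDimensional ℝ M) [FiniteDimensional ℝ (E ⧸ K)] :
    ¬FiniteDimensional ℝ ↥(M ⊓ K) := by
  rw [FiniteDimensional, Module.Finite.iff_fg] at hM ⊢
  refine fun hMK => hM (Submodule.fg_of_fg_map_of_fg_inf_ker K.mkQ ?_ (by rwa [K.ker_mkQ]))
  exact IsNoetherian.noetherian _

/-- `K` is the common kernel of norming functionals of the points of a `1/2`-net of the unit
sphere of `F`. -/
theorem exists_finiteDimensional_quotient_norm_le_two_mul_norm_add (F : Submodule ℝ E)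
    [FiniteDimensional ℝ F] :
    ∃ K : Submodule ℝ E, FiniteDimensional ℝ (E ⧸ K) ∧
      ∀ y ∈ F, ∀ v ∈ K, ‖y‖ ≤ 2 * ‖y + v‖ := by
  obtain ⟨t, hts, ht, hcover⟩ :=
    finite_cover_balls_of_compact (isCompact_sphere (0 : F) 1) (by norm_num : (0 : ℝ) < 1 / 2)
  have := ht.to_subtype
  choose g hg_norm hg_apply using fun w : t => exists_dual_vector'' ℝ (w : E)
  let Φ : E →ₗ[ℝ] t → ℝ := LinearMap.pi fun w => (g w : E →ₗ[ℝ] ℝ)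
  refine ⟨LinearMap.ker Φ, (LinearMap.quotKerEquivRange Φ).symm.finiteDimensional, ?_⟩
  intro y hy v hv
  obtain rfl | hy0 := eq_or_ne y 0
  · simp
  let u : F := ‖y‖⁻¹ • ⟨y, hy⟩
  have hu : u ∈ sphere (0 : F) 1 := by
    simp [u, norm_smul, hy0]
  obtain ⟨w, hwt, huw⟩ := Set.mem_iUnion₂.mp (hcover hu)
  have hw : ‖(w : E)‖ = 1 := by simpa using hts hwt
  have hgv : g ⟨w, hwt⟩ v = 0 := congrFun (LinearMap.mem_ker.mp hv) ⟨w, hwt⟩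
  have hyu : ‖y‖ • (u : E) = y := by simp [u, smul_smul, hy0]
  have hle : ∀ z, g ⟨w, hwt⟩ z ≤ ‖z‖ := fun z =>
    (le_abs_self _).trans (by simpa using (g _).le_of_opNorm_le (hg_norm _) z)
  have hwu : ‖(w : E) - u‖ < 1 / 2 := by
    rw [← dist_eq_norm, dist_comm]; exact huw
  have key : ‖y‖ ≤ ‖y + v‖ + ‖y‖ * (1 / 2) := calc
    ‖y‖ = g ⟨w, hwt⟩ (y + v) + ‖y‖ * g ⟨w, hwt⟩ ((w : E) - u) := by
        have hgy : g ⟨w, hwt⟩ y = ‖y‖ * g ⟨w, hwt⟩ u := by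
          conv_lhs => rw [← hyu]
          rw [map_smul, smul_eq_mul]
        rw [map_add, hgv, map_sub, hgy, hg_apply, hw, RCLike.ofReal_one]
        ring
    _ ≤ ‖y + v‖ + ‖y‖ * (1 / 2) := by
        gcongr
        · exact hle _
        · exact (hle _).trans hwu.le
  linarith

end FiniteCodimension

theorem exists_sum_range_eq_of_mem_span_range {R M : Type*} [Semiring R] [AddCommMonoid M]
    [Module R M] {x : ℕ → M} {y : M} (hy : y ∈ Submodule.span R (Set.range x)) :
    ∃ (n : ℕ) (c : ℕ → R), ∑ i ∈ range n, c i • x i = y := by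
  obtain ⟨c, rfl⟩ := Finsupp.mem_span_range_iff_exists_finsupp.1 hy
  obtain ⟨n, hn⟩ := c.support.exists_nat_subset_range
  exact ⟨n, c,
    (Finsupp.sum_of_support_subset c hn (fun i a => a • x i) fun _ _ => zero_smul R _).symm⟩

section GrunblumCondition

variable {E F : Type*} [NormedAddCommGroup E] [NormedSpace ℝ E]
  [NormedAddCommGroup F] [NormedSpace ℝ F]

/-- Grünblum's criterion: for nonzero vectors this says that `x` is a basic sequence with basis
constant at most `C`. -/
def GrunblumCondition (C : ℝ) (x : ℕ → E) : Prop :=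
  ∀ (c : ℕ → ℝ) {m n : ℕ}, m ≤ n →
    ‖∑ i ∈ range m, c i • x i‖ ≤ C * ‖∑ i ∈ range n, c i • x i‖

namespace GrunblumCondition

variable {C : ℝ} {x : ℕ → E}

theorem of_forall_mem (A B : ℕ → Submodule ℝ E) (hA : ∀ {i m}, i < m → x i ∈ A m)
    (hB : ∀ {m i}, m ≤ i → x i ∈ B m)
    (hAB : ∀ m, ∀ y ∈ A m, ∀ v ∈ B m, ‖y‖ ≤ C * ‖y + v‖) : GrunblumCondition C x := by
  intro c m n hmn
  rw [← sum_range_add_sum_Ico _ hmn]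
  exact hAB m _ (Submodule.sum_mem _ fun i hi => Submodule.smul_mem _ _ (hA (mem_range.1 hi)))
    _ (Submodule.sum_mem _ fun i hi => Submodule.smul_mem _ _ (hB (mem_Ico.1 hi).1))

theorem one_le (hx : GrunblumCondition C x) (hx1 : ∀ i, ‖x i‖ = 1) : 1 ≤ C := by
  simpa [hx1] using hx (fun _ => 1) le_rfl (n := 1)

theorem abs_coeff_le (hx : GrunblumCondition C x) (hx1 : ∀ i, ‖x i‖ = 1)
    (c : ℕ → ℝ) {m n : ℕ} (hmn : m < n) :
    |c m| ≤ 2 * C * ‖∑ i ∈ range n, c i • x i‖ := by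
  have hm : |c m| = ‖∑ i ∈ range (m + 1), c i • x i - ∑ i ∈ range m, c i • x i‖ := by
    rw [sum_range_succ, add_sub_cancel_left, norm_smul, hx1, mul_one, Real.norm_eq_abs]
  rw [hm]
  linarith [norm_sub_le (∑ i ∈ range (m + 1), c i • x i) (∑ i ∈ range m, c i • x i),
    hx c hmn, hx c hmn.le]

theorem linearIndependent (hx : GrunblumCondition C x) (hx1 : ∀ i, ‖x i‖ = 1) :
    LinearIndependent ℝ x := by
  rw [linearIndependent_iff']
  intro s g hg i hi
  obtain ⟨n, hn⟩ := s.exists_nat_subset_range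
  have hsum : ∑ j ∈ range n, (if j ∈ s then g j else 0) • x j = 0 := by
    simp only [ite_smul, zero_smul, sum_ite_mem, inter_eq_right.2 hn, hg]
  have h := hx.abs_coeff_le hx1 (fun j => if j ∈ s then g j else 0) (mem_range.1 (hn hi))
  rw [hsum, norm_zero, mul_zero, abs_nonpos_iff] at h
  simpa [hi] using h

theorem norm_apply_le (hx : GrunblumCondition C x) (hx1 : ∀ i, ‖x i‖ = 1)
    (T : E →L[ℝ] F) {η : ℝ} (hT : ∀ i, ‖T (x i)‖ ≤ η * (1 / 2) ^ i) {y : E}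
    (hy : y ∈ Submodule.span ℝ (Set.range x)) : ‖T y‖ ≤ 4 * C * η * ‖y‖ := by
  obtain ⟨n, c, rfl⟩ := exists_sum_range_eq_of_mem_span_range hy
  have hη : 0 ≤ η := by simpa using (norm_nonneg (T (x 0))).trans (hT 0)
  have hC : 0 ≤ C := zero_le_one.trans (hx.one_le hx1)
  set S := ∑ i ∈ range n, c i • x i
  calc ‖T S‖ = ‖∑ i ∈ range n, c i • T (x i)‖ := by simp only [S, map_sum, map_smul]
    _ ≤ ∑ i ∈ range n, |c i| * ‖T (x i)‖ := by
        simpa only [norm_smul, Real.norm_eq_abs] using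
          norm_sum_le (range n) fun i => c i • T (x i)
    _ ≤ ∑ i ∈ range n, 2 * C * ‖S‖ * (η * (1 / 2) ^ i) := by
        gcongr with i hi
        exacts [hx.abs_coeff_le hx1 c (mem_range.1 hi), hT i]
    _ = 2 * C * ‖S‖ * η * ∑ i ∈ range n, (1 / 2 : ℝ) ^ i := by
        rw [mul_sum]; simp only [mul_assoc]
    _ ≤ 2 * C * ‖S‖ * η * 2 := by gcongr; exact sum_geometric_two_le n
    _ = 4 * C * η * ‖S‖ := by ring

end GrunblumCondition

theorem exists_seq_grunblumCondition_two {M : Submodule ℝ E} (hM : ¬FiniteDimensional ℝ M)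
    (p : ℕ → E → Prop) (hp : ∀ n, ∀ N ≤ M, ¬FiniteDimensional ℝ N → ∃ x ∈ N, p n x) :
    ∃ x : ℕ → E, (∀ n, x n ∈ M ∧ p n (x n)) ∧ GrunblumCondition 2 x := by
  -- Mazur's construction, with state `s = (F, K)`: `F` is the span of the vectors chosen so far
  -- and the next one is taken in `M ⊓ K`, where `‖y‖ ≤ 2 ‖y + v‖` for `y ∈ F` and `v ∈ K`.
  have step (n : ℕ) (s : Submodule ℝ E × Submodule ℝ E) : ∃ (x : E) (K : Submodule ℝ E),
      FiniteDimensional ℝ s.1 → ¬FiniteDimensional ℝ ↥(M ⊓ s.2) →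
        x ∈ M ⊓ s.2 ∧ p n x ∧ K ≤ s.2 ∧ ¬FiniteDimensional ℝ ↥(M ⊓ K) ∧
          ∀ y ∈ s.1 ⊔ Submodule.span ℝ {x}, ∀ v ∈ K, ‖y‖ ≤ 2 * ‖y + v‖ := by
    by_cases h : FiniteDimensional ℝ s.1 ∧ ¬FiniteDimensional ℝ ↥(M ⊓ s.2)
    · obtain ⟨hF, hMK⟩ := h
      obtain ⟨x, hx, hpx⟩ := hp n _ inf_le_left hMK
      obtain ⟨K, hK, hnorm⟩ :=
        exists_finiteDimensional_quotient_norm_le_two_mul_norm_add (s.1 ⊔ Submodule.span ℝ {x})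
      refine ⟨x, s.2 ⊓ K, fun _ _ => ⟨hx, hpx, inf_le_left, ?_, fun y hy v hv => hnorm y hy v hv.2⟩⟩
      rw [← inf_assoc]
      exact not_finiteDimensional_inf_of_finiteDimensional_quotient hMK
    · exact ⟨0, ⊥, fun hF hMK => (h ⟨hF, hMK⟩).elim⟩
  choose x K hxK using step
  let s (n : ℕ) : Submodule ℝ E × Submodule ℝ E :=
    Nat.rec (⊥, ⊤) (fun n s => (s.1 ⊔ Submodule.span ℝ {x n s}, K n s)) n
  have hs (n : ℕ) : FiniteDimensional ℝ (s n).1 ∧ ¬FiniteDimensional ℝ ↥(M ⊓ (s n).2) ∧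
      ∀ y ∈ (s n).1, ∀ v ∈ (s n).2, ‖y‖ ≤ 2 * ‖y + v‖ := by
    induction n with
    | zero =>
      refine ⟨inferInstanceAs (FiniteDimensional ℝ (⊥ : Submodule ℝ E)), ?_, ?_⟩
      · change ¬FiniteDimensional ℝ ↥(M ⊓ ⊤)
        rwa [inf_top_eq]
      · intro y hy v _
        simp [(Submodule.mem_bot ℝ).1 hy]
    | succ n ih =>
      obtain ⟨-, -, -, hK, hnorm⟩ := hxK n (s n) ih.1 ih.2.1
      have := ih.1
      exact ⟨inferInstanceAs (FiniteDimensional ℝ ↥((s n).1 ⊔ Submodule.span ℝ {x n (s n)})),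
        hK, hnorm⟩
  have hx (n : ℕ) := hxK n (s n) (hs n).1 (hs n).2.1
  refine ⟨fun n => x n (s n), fun n => ⟨(hx n).1.1, (hx n).2.1⟩,
    .of_forall_mem (fun n => (s n).1) (fun n => (s n).2) ?_ ?_ fun m => (hs m).2.2⟩
  · intro i m him
    exact monotone_nat_of_le_succ (f := fun n => (s n).1) (fun n => le_sup_left) him
      (Submodule.mem_sup_right (Submodule.mem_span_singleton_self _))
  · intro m i hmi
    exact antitone_nat_of_succ_le (f := fun n => (s n).2) (fun n => (hx n).2.2.1) hmi (hx i).1.2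

end GrunblumCondition

section BoundedBelow

variable {E F : Type*} [NormedAddCommGroup E] [NormedSpace ℝ E]
  [NormedAddCommGroup F] [NormedSpace ℝ F]

def IsBoundedBelowOn (T : E →L[ℝ] F) (M : Submodule ℝ E) : Prop :=
  ∃ c > 0, ∀ x ∈ M, c * ‖x‖ ≤ ‖T x‖

theorem exists_norm_eq_one_norm_apply_lt_of_not_isBoundedBelowOn {T : E →L[ℝ] F}
    {N : Submodule ℝ E} (hT : ¬IsBoundedBelowOn T N) {δ : ℝ} (hδ : 0 < δ) :
    ∃ x ∈ N, ‖x‖ = 1 ∧ ‖T x‖ < δ := by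
  simp only [IsBoundedBelowOn, not_exists, not_and, not_forall, not_le] at hT
  obtain ⟨x, hxN, hx⟩ := hT δ hδ
  have hx0 : x ≠ 0 := by
    rintro rfl
    simp at hx
  refine ⟨‖x‖⁻¹ • x, N.smul_mem _ hxN, by simp [norm_smul, hx0], ?_⟩
  rwa [map_smul, norm_smul, norm_inv, norm_norm, inv_mul_lt_iff₀ (norm_pos_iff.2 hx0), mul_comm]

theorem exists_le_not_finiteDimensional_norm_apply_le (T : E →L[ℝ] F) {M : Submodule ℝ E}
    (hM : ¬FiniteDimensional ℝ M)
    (hT : ∀ N ≤ M, ¬FiniteDimensional ℝ N → ¬IsBoundedBelowOn T N) {ε : ℝ} (hε : 0 < ε) :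
    ∃ M' ≤ M, ¬FiniteDimensional ℝ M' ∧ ∀ x ∈ M', ‖T x‖ ≤ ε * ‖x‖ := by
  obtain ⟨x, hx, hC⟩ := exists_seq_grunblumCondition_two hM
    (fun n x => ‖x‖ = 1 ∧ ‖T x‖ ≤ ε / 8 * (1 / 2) ^ n) fun n N hNM hN => by
      obtain ⟨x, hxN, hx1, hTx⟩ := exists_norm_eq_one_norm_apply_lt_of_not_isBoundedBelowOn
        (hT N hNM hN) (by positivity : 0 < ε / 8 * (1 / 2) ^ n)
      exact ⟨x, hxN, hx1, hTx.le⟩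
  have hx1 (n : ℕ) : ‖x n‖ = 1 := (hx n).2.1
  refine ⟨Submodule.span ℝ (Set.range x),
    Submodule.span_le.2 (Set.range_subset_iff.2 fun n => (hx n).1), fun _ => ?_, fun y hy => ?_⟩
  · exact Module.Finite.not_linearIndependent_of_infinite _
      (linearIndependent_span (hC.linearIndependent hx1))
  · exact (hC.norm_apply_le hx1 T (fun n => (hx n).2.2) hy).trans_eq (by ring)

theorem exists_le_not_finiteDimensional_forall_norm_apply_le {ι : Type*} [Fintype ι]
    {F : ι → Type*} [∀ i, NormedAddCommGroup (F i)] [∀ i, NormedSpace ℝ (F i)]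
    (T : ∀ i, E →L[ℝ] F i) {M : Submodule ℝ E} (hM : ¬FiniteDimensional ℝ M)
    (hT : ∀ i, ∀ N ≤ M, ¬FiniteDimensional ℝ N → ¬IsBoundedBelowOn (T i) N) {ε : ℝ}
    (hε : 0 < ε) :
    ∃ M' ≤ M, ¬FiniteDimensional ℝ M' ∧ ∀ i, ∀ x ∈ M', ‖T i x‖ ≤ ε * ‖x‖ := by
  classical
  suffices ∀ s : Finset ι, ∃ M' ≤ M, ¬FiniteDimensional ℝ M' ∧
      ∀ i ∈ s, ∀ x ∈ M', ‖T i x‖ ≤ ε * ‖x‖ by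
    obtain ⟨M', hM'M, hM', hT'⟩ := this univ
    exact ⟨M', hM'M, hM', fun i => hT' i (mem_univ i)⟩
  intro s
  induction s using Finset.induction_on with
  | empty => exact ⟨M, le_rfl, hM, by simp⟩
  | insert i s _ ih =>
    obtain ⟨M₁, hM₁M, hM₁, hs⟩ := ih
    obtain ⟨M₂, hM₂M₁, hM₂, hi⟩ := exists_le_not_finiteDimensional_norm_apply_le (T i) hM₁
      (fun N hN => hT i N (hN.trans hM₁M)) hε
    refine ⟨M₂, hM₂M₁.trans hM₁M, hM₂, ?_⟩
    simp only [mem_insert, forall_eq_or_imp]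
    exact ⟨hi, fun j hj x hx => hs j hj x (hM₂M₁ hx)⟩

/-- A finite sum of strictly singular operators is strictly singular, applied to the coordinate
projections, which sum to the identity. -/
theorem exists_isBoundedBelowOn_proj {I : Type*} [Fintype I] {X : I → Type*}
    [∀ i, NormedAddCommGroup (X i)] [∀ i, NormedSpace ℝ (X i)] {V : Submodule ℝ (∀ i, X i)}
    (hV : ¬FiniteDimensional ℝ V) :
    ∃ i, ∃ M ≤ V, ¬FiniteDimensional ℝ M ∧ IsBoundedBelowOn (ContinuousLinearMap.proj i) M := by
  by_contra! h
  obtain ⟨M, -, hM, hproj⟩ := exists_le_not_finiteDimensional_forall_norm_apply_le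
    (fun i => ContinuousLinearMap.proj (R := ℝ) (φ := X) i) hV h (by norm_num : (0 : ℝ) < 1 / 2)
  obtain ⟨x, hxM, hx0⟩ := M.exists_mem_ne_zero_of_ne_bot fun hbot => by
    subst hbot
    exact hM inferInstance
  have : ‖x‖ ≤ 1 / 2 * ‖x‖ :=
    (pi_norm_le_iff_of_nonneg (by positivity)).2 fun i => hproj i x hxM
  linarith [norm_pos_iff.2 hx0]

end BoundedBelow

theorem Submodule.closedComplemented_iff_exists_range_eq {E : Type*} [NormedAddCommGroup E]
    [NormedSpace ℝ E] {W : Submodule ℝ E} :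
    W.ClosedComplemented ↔
      ∃ P : E →L[ℝ] E, LinearMap.range (P : E →ₗ[ℝ] E) = W ∧ ∀ x ∈ W, P x = x := by
  constructor
  · rintro ⟨P, hP⟩
    refine ⟨W.subtypeL ∘L P, le_antisymm ?_ fun x hx => ⟨x, congrArg Subtype.val (hP ⟨x, hx⟩)⟩,
      fun x hx => congrArg Subtype.val (hP ⟨x, hx⟩)⟩
    rintro _ ⟨x, rfl⟩
    exact (P x).2
  · rintro ⟨P, hP, hPW⟩
    exact ⟨P.codRestrict W fun x => hP ▸ LinearMap.mem_range_self _ x,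
      fun x => Subtype.ext (hPW x x.2)⟩

theorem Submodule.ClosedComplemented.of_continuousLinearEquiv {E F : Type*}
    [NormedAddCommGroup E] [NormedSpace ℝ E] [NormedAddCommGroup F] [NormedSpace ℝ F]
    (T : E →L[ℝ] F) {W : Submodule ℝ E} {W₀ : Submodule ℝ F} (e : W ≃L[ℝ] W₀)
    (he : ∀ x, (e x : F) = T x) (h : W₀.ClosedComplemented) : W.ClosedComplemented := by
  obtain ⟨P, hP⟩ := h
  refine ⟨(e.symm : W₀ →L[ℝ] W) ∘L P ∘L T, fun x => ?_⟩
  have : P (T x) = e x := by rw [← hP (e x), he]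
  simp [this]

namespace IsBoundedBelowOn

variable {E F : Type*} [NormedAddCommGroup E] [NormedSpace ℝ E]
  [NormedAddCommGroup F] [NormedSpace ℝ F] {T : E →L[ℝ] F} {N : Submodule ℝ E}

theorem topologicalClosure (hT : IsBoundedBelowOn T N) :
    IsBoundedBelowOn T N.topologicalClosure := by
  obtain ⟨c, hc, hN⟩ := hT
  refine ⟨c, hc, fun x hx => ?_⟩
  rw [← SetLike.mem_coe, N.topologicalClosure_coe] at hx
  exact closure_minimal hN
    (isClosed_le (continuous_const.mul continuous_norm) T.continuous.norm) hx

theorem exists_continuousLinearEquiv (hT : IsBoundedBelowOn T N) {W₀ : Submodule ℝ F}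
    (hW₀ : W₀ ≤ N.map (T : E →ₗ[ℝ] F)) :
    ∃ e : ↥(N ⊓ W₀.comap (T : E →ₗ[ℝ] F)) ≃L[ℝ] W₀, ∀ x, (e x : F) = T x := by
  obtain ⟨c, hc, hN⟩ := hT
  let f : ↥(N ⊓ W₀.comap (T : E →ₗ[ℝ] F)) →ₗ[ℝ] W₀ :=
    ((T : E →ₗ[ℝ] F) ∘ₗ (N ⊓ W₀.comap (T : E →ₗ[ℝ] F)).subtype).codRestrict W₀ fun x => x.2.2
  have hf : Function.Bijective f := by
    refine ⟨(injective_iff_map_eq_zero f).2 fun x hx => ?_, fun w => ?_⟩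
    · have := hN x x.2.1
      rw [show T x = 0 from congrArg Subtype.val hx, norm_zero] at this
      exact norm_le_zero_iff.1 (nonpos_of_mul_nonpos_right this hc)
    · obtain ⟨x, hxN, hx⟩ := hW₀ w.2
      exact ⟨⟨x, hxN, show T x ∈ W₀ from hx ▸ w.2⟩, Subtype.ext hx⟩
  let e₀ := LinearEquiv.ofBijective f hf
  refine ⟨e₀.toContinuousLinearEquivOfBounds ‖T‖ c⁻¹ (fun x => T.le_opNorm x) fun w => ?_,
    fun x => rfl⟩
  rw [le_inv_mul_iff₀ hc]
  have h := hN _ (e₀.symm w).2.1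
  rwa [show T (e₀.symm w) = w from congrArg Subtype.val (e₀.apply_symm_apply w)] at h

theorem not_finiteDimensional_map (hT : IsBoundedBelowOn T N) (hN : ¬FiniteDimensional ℝ N) :
    ¬FiniteDimensional ℝ ↥(N.map (T : E →ₗ[ℝ] F)) := fun _ => by
  obtain ⟨e, -⟩ := hT.exists_continuousLinearEquiv le_rfl
  have := e.toLinearEquiv.symm.finiteDimensional
  exact hN (Submodule.finiteDimensional_of_le
    (le_inf le_rfl (Submodule.le_comap_map (T : E →ₗ[ℝ] F) N)))

theorem isClosed_map [CompleteSpace E] (hT : IsBoundedBelowOn T N) (hN : IsClosed (N : Set E)) :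
    IsClosed (N.map (T : E →ₗ[ℝ] F) : Set F) := by
  obtain ⟨c, hc, hbound⟩ := hT
  have := hN.completeSpace_coe
  have hanti : AntilipschitzWith c⁻¹.toNNReal (T ∘L N.subtypeL) :=
    (T ∘L N.subtypeL).antilipschitz_of_bound fun x => by
      rw [Real.coe_toNNReal _ (inv_nonneg.2 hc.le), le_inv_mul_iff₀ hc]
      exact hbound x x.2
  convert hanti.isClosed_range (T ∘L N.subtypeL).uniformContinuous
  ext
  simp

end IsBoundedBelowOn

theorem USubprojN.exists_of_isBoundedBelowOn {E X : Type*} [NormedAddCommGroup E]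
    [NormedSpace ℝ E] [CompleteSpace E] [NormedAddCommGroup X] [NormedSpace ℝ X] {κ : Type*}
    {Z : κ → Type*} [∀ k, NormedAddCommGroup (Z k)] [∀ k, NormedSpace ℝ (Z k)]
    (hX : USubprojN X Z) (T : E →L[ℝ] X) {N : Submodule ℝ E} (hN : IsClosed (N : Set E))
    (hNfin : ¬FiniteDimensional ℝ N) (hT : IsBoundedBelowOn T N) :
    ∃ W ≤ N, IsClosed (W : Set E) ∧ ¬FiniteDimensional ℝ W ∧
      (∃ P : E →L[ℝ] E, LinearMap.range (P : E →ₗ[ℝ] E) = W ∧ ∀ x ∈ W, P x = x) ∧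
      ∃ k, Nonempty (↥W ≃L[ℝ] Z k) := by
  obtain ⟨W₀, hW₀, hW₀closed, hW₀fin, hP, k, ⟨e₀⟩⟩ :=
    hX _ (hT.isClosed_map hN) (hT.not_finiteDimensional_map hNfin)
  obtain ⟨e, he⟩ := hT.exists_continuousLinearEquiv hW₀
  rw [← Submodule.closedComplemented_iff_exists_range_eq] at hP
  exact ⟨_, inf_le_left, hN.inter (hW₀closed.preimage T.continuous),
    fun _ => hW₀fin e.toLinearEquiv.finiteDimensional,
    Submodule.closedComplemented_iff_exists_range_eq.1 (hP.of_continuousLinearEquiv T e he),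
    k, ⟨e.trans e₀⟩⟩

theorem stmt12_general {I : Type*} [Fintype I]
    (X : I → Type*) [∀ i, NormedAddCommGroup (X i)] [∀ i, NormedSpace ℝ (X i)]
    [∀ i, CompleteSpace (X i)]
    {κ : I → Type*} (Z : ∀ i, κ i → Type*)
    [∀ i k, NormedAddCommGroup (Z i k)] [∀ i k, NormedSpace ℝ (Z i k)]
    (h : ∀ i, USubprojN (X i) (Z i)) :
    USubprojN (∀ i, X i) (fun s : Σ i, κ i => Z s.1 s.2) := by
  intro V hV hVfin
  obtain ⟨i, M, hMV, hM, hT⟩ := exists_isBoundedBelowOn_proj hVfin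
  obtain ⟨W, hWM, hW, hWfin, hP, k, ⟨e⟩⟩ := (h i).exists_of_isBoundedBelowOn _
    M.isClosed_topologicalClosure
    (fun _ => hM (Submodule.finiteDimensional_of_le M.le_topologicalClosure))
    hT.topologicalClosure
  exact ⟨W, hWM.trans (M.topologicalClosure_minimal hMV hV), hW, hWfin, hP, ⟨i, k⟩, ⟨e⟩⟩

/-- A finite direct sum (with the max norm) of `𝒰ᵢ`-subprojective Banach spaces is
`⋃ᵢ 𝒰ᵢ`-subprojective. -/
theorem stmt12 {I : Type*} [Fintype I]
    (X : I → Type*) [∀ i, NormedAddCommGroup (X i)] [∀ i, NormedSpace ℝ (X i)]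
    [∀ i, CompleteSpace (X i)]
    {κ : I → Type*} (Z : ∀ i, κ i → Type*)
    [∀ i k, NormedAddCommGroup (Z i k)] [∀ i k, NormedSpace ℝ (Z i k)]
    [∀ i k, CompleteSpace (Z i k)]
    (hZ : ∀ i k, ¬ FiniteDimensional ℝ (Z i k))
    (h : ∀ i, USubprojN (X i) (Z i)) :
    USubprojN (∀ i, X i) (fun s : Σ i, κ i => Z s.1 s.2) :=
  stmt12_general X Z h
end

section
/- Let X be a Banach space with unconditional basis ℬ = (x_j)_{j∈𝒩} and let (𝒩ₙ)_{n=1}^∞ be a partition of 𝒩 into finite sets. Suppose there is a constant C such that ‖∑ₙ fₙ‖ ≤ C‖∑ₙ gₙ‖ whenever fₙ, gₙ ∈ X satisfy ‖fₙ‖ ≤ ‖gₙ‖ and supp(fₙ) ∪ supp(gₙ) ⊆ 𝒩ₙ for all n. If ℬ_u = (uₙ) and ℬ_v = (vₙ) are semi-normalized sequences in X with supp(uₙ) ∪ supp(vₙ) ⊆ 𝒩ₙ for all n, then ℬ_u and ℬ_v are equivalent, and both [ℬ_u] and [ℬ_v] are complemented in X. -/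
open Filter Topology

/-- A submodule is complemented if it is the range of a continuous linear projection. -/
def IsComplementedSub {X : Type*} [AddCommGroup X] [Module ℝ X] [TopologicalSpace X]
    (V : Submodule ℝ X) : Prop :=
  ∃ P : X →L[ℝ] X, LinearMap.range (P : X →ₗ[ℝ] X) = V ∧ ∀ x ∈ V, P x = x

/-- Two sequences are equivalent: a series of scalars converges along one iff along the other. -/
def SeqEquiv {X Y : Type*} [AddCommGroup X] [Module ℝ X] [TopologicalSpace X]
    [AddCommGroup Y] [Module ℝ Y] [TopologicalSpace Y] (u : ℕ → X) (v : ℕ → Y) : Prop :=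
  ∀ a : ℕ → ℝ,
    (∃ x : X, Tendsto (fun N => ∑ n ∈ Finset.range N, a n • u n) atTop (𝓝 x)) ↔
    (∃ y : Y, Tendsto (fun N => ∑ n ∈ Finset.range N, a n • v n) atTop (𝓝 y))

/-- `f` is supported in `s` with respect to the unconditional basis `b`. -/
def SuppIn {X ι : Type*} [AddCommGroup X] [Module ℝ X] [TopologicalSpace X]
    (b : ι → X) (s : Set ι) (f : X) : Prop :=
  ∃ a : ι → ℝ, (∀ i, i ∉ s → a i = 0) ∧ HasSum (fun i => a i • b i) f

/-! The hypothesis on `C` compares any two block-diagonal series whose blocks are ordered by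
norm. Applied to the tails `∑_{m ≤ n < M} aₙ uₙ` and `∑_{m ≤ n < M} aₙ vₙ` (with the blocks rescaled
by the semi-normalization constants) it shows that one series is Cauchy when the other is.

For complementation, let `Eₙ` be the block projections of the basis and pick functionals `ψₙ`
with `ψₙ uₙ = 1` and `‖ψₙ‖ = ‖uₙ‖⁻¹`. Then `‖ψₙ (Eₙ f) • uₙ‖ ≤ ‖Eₙ f‖` blockwise, so
`P f = ∑ ψₙ (Eₙ f) • uₙ` converges with `‖P f‖ ≤ C ‖∑ Eₙ f‖ = C ‖f‖`, and `P` fixes every `uₙ`. -/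

open Finset in
theorem cauchySeq_range_sum_of_norm_Ico_sum_le {E : Type*} [SeminormedAddCommGroup E]
    {f g : ℕ → E} (K : ℝ) (h : ∀ m n, ‖∑ i ∈ Ico m n, f i‖ ≤ K * ‖∑ i ∈ Ico m n, g i‖)
    (hg : CauchySeq fun n => ∑ i ∈ range n, g i) : CauchySeq fun n => ∑ i ∈ range n, f i := by
  rw [Metric.cauchySeq_iff'] at hg ⊢
  intro ε hε
  obtain ⟨δ, hδ, hKδ⟩ := exists_pos_mul_lt hε |K|
  obtain ⟨M, hM⟩ := hg δ hδ
  refine ⟨M, fun n hn => ?_⟩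
  have hgM := hM n hn
  rw [dist_eq_norm, ← sum_Ico_eq_sub _ hn] at hgM ⊢
  calc ‖∑ i ∈ Ico M n, f i‖ ≤ K * ‖∑ i ∈ Ico M n, g i‖ := h M n
    _ ≤ |K| * ‖∑ i ∈ Ico M n, g i‖ := by gcongr; exact le_abs_self K
    _ ≤ |K| * δ := by gcongr
    _ < ε := hKδ

theorem summable_of_norm_finset_sum_le {α E : Type*} [NormedAddCommGroup E] [CompleteSpace E]
    {f g : α → E} (K : ℝ) (h : ∀ t : Finset α, ‖∑ i ∈ t, f i‖ ≤ K * ‖∑ i ∈ t, g i‖)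
    (hg : Summable g) : Summable f := by
  rw [summable_iff_vanishing_norm] at hg ⊢
  intro ε hε
  obtain ⟨δ, hδ, hKδ⟩ := exists_pos_mul_lt hε |K|
  obtain ⟨s, hs⟩ := hg δ hδ
  refine ⟨s, fun t ht => ?_⟩
  calc ‖∑ i ∈ t, f i‖ ≤ K * ‖∑ i ∈ t, g i‖ := h t
    _ ≤ |K| * ‖∑ i ∈ t, g i‖ := by gcongr; exact le_abs_self K
    _ ≤ |K| * δ := by gcongr; exact (hs t ht).le
    _ < ε := hKδ

theorem exists_dual_apply_self_eq_one {𝕜 E : Type*} [RCLike 𝕜] [NormedAddCommGroup E]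
    [NormedSpace 𝕜 E] {x : E} (hx : x ≠ 0) :
    ∃ ψ : StrongDual 𝕜 E, ψ x = 1 ∧ ∀ y, ‖ψ y • x‖ ≤ ‖y‖ := by
  have hx' : ‖x‖ ≠ 0 := norm_ne_zero_iff.mpr hx
  obtain ⟨g, hg, hgx⟩ := exists_dual_vector 𝕜 x hx'
  refine ⟨(‖x‖⁻¹ : 𝕜) • g, ?_, fun y => ?_⟩
  · simp [hgx, hx']
  · calc ‖((‖x‖⁻¹ : 𝕜) • g) y • x‖ = ‖g y‖ := by
          simp only [smul_apply, smul_eq_mul, norm_smul, norm_mul, norm_inv,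
            norm_algebraMap', norm_norm]
          field_simp
      _ ≤ ‖y‖ := by simpa [hg] using g.le_opNorm y

theorem isComplementedSub_topologicalClosure_span {X : Type*} [AddCommGroup X] [Module ℝ X]
    [TopologicalSpace X] [T2Space X] [IsTopologicalAddGroup X] [ContinuousConstSMul ℝ X]
    {s : Set X} (P : X →L[ℝ] X) (hPs : ∀ x ∈ s, P x = x)
    (hP : ∀ x, P x ∈ (Submodule.span ℝ s).topologicalClosure) :
    IsComplementedSub (Submodule.span ℝ s).topologicalClosure := by
  have hfix : ∀ x ∈ (Submodule.span ℝ s).topologicalClosure, P x = x := fun x hx =>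
    ContinuousLinearMap.eqOn_closure_span (f := P) (g := ContinuousLinearMap.id ℝ X) hPs hx
  refine ⟨P, le_antisymm ?_ fun x hx => ⟨x, hfix x hx⟩, hfix⟩
  rintro _ ⟨x, rfl⟩
  exact hP x

theorem exists_preimage_singleton_eq {ι κ : Type*} {N : κ → Set ι}
    (hdisj : ∀ m n, m ≠ n → Disjoint (N m) (N n)) (hcover : ⋃ n, N n = Set.univ) :
    ∃ e : ι → κ, ∀ n, e ⁻¹' {n} = N n := by
  choose e he using Set.iUnion_eq_univ_iff.mp hcover
  refine ⟨e, fun n => Set.ext fun i => ⟨?_, fun hi => ?_⟩⟩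
  · rintro rfl
    exact he i
  · by_contra hne
    exact Set.disjoint_left.mp (hdisj _ _ hne) (he i) hi

section BasisCoefficients

variable {X ι : Type*} [AddCommGroup X] [Module ℝ X] [TopologicalSpace X]

theorem SuppIn.zero (b : ι → X) (s : Set ι) : SuppIn b s 0 :=
  ⟨0, fun _ _ => rfl, by simpa only [Pi.zero_apply, zero_smul] using hasSum_zero⟩

theorem SuppIn.smul [ContinuousConstSMul ℝ X] {b : ι → X} {s : Set ι} {f : X} (r : ℝ)
    (h : SuppIn b s f) : SuppIn b s (r • f) := by
  obtain ⟨a, ha, hsum⟩ := h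
  refine ⟨r • a, fun i hi => by simp [ha i hi], ?_⟩
  simpa only [Pi.smul_apply, smul_assoc] using hsum.const_smul r

variable [IsTopologicalAddGroup X] [ContinuousConstSMul ℝ X] {b : ι → X}
  (hb : ∀ x : X, ∃! a : ι → ℝ, HasSum (fun i => a i • b i) x)

noncomputable def basisCoeff : X →ₗ[ℝ] ι → ℝ where
  toFun x := (hb x).exists.choose
  map_add' x y := (hb (x + y)).unique (hb (x + y)).exists.choose_spec <| by
    simpa only [Pi.add_apply, add_smul] using
      (hb x).exists.choose_spec.add (hb y).exists.choose_spec
  map_smul' r x := (hb (r • x)).unique (hb (r • x)).exists.choose_spec <| by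
    simpa only [Pi.smul_apply, smul_assoc, RingHom.id_apply] using
      (hb x).exists.choose_spec.const_smul r

theorem hasSum_basisCoeff (x : X) : HasSum (fun i => basisCoeff hb x i • b i) x :=
  (hb x).exists.choose_spec

theorem basisCoeff_eq_of_hasSum {x : X} {a : ι → ℝ} (h : HasSum (fun i => a i • b i) x) :
    basisCoeff hb x = a :=
  (hb x).unique (hasSum_basisCoeff hb x) h

theorem SuppIn.basisCoeff_eq_zero {s : Set ι} {f : X} (hf : SuppIn b s f) {i : ι} (hi : i ∉ s) :
    basisCoeff hb f i = 0 := by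
  obtain ⟨a, ha, hsum⟩ := hf
  rw [basisCoeff_eq_of_hasSum hb hsum]
  exact ha i hi

end BasisCoefficients

section BlockProjection

variable {X ι : Type*} [NormedAddCommGroup X] [NormedSpace ℝ X] [CompleteSpace X] {b : ι → X}
  (hb : ∀ x : X, ∃! a : ι → ℝ, HasSum (fun i => a i • b i) x)

theorem summable_indicator_basisCoeff_smul (s : Set ι) (x : X) :
    Summable fun i => s.indicator (basisCoeff hb x) i • b i := by
  simpa only [Set.indicator_smul_left] using (hasSum_basisCoeff hb x).summable.indicator s

noncomputable def blockProj (s : Set ι) : X →ₗ[ℝ] X where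
  toFun x := ∑' i, s.indicator (basisCoeff hb x) i • b i
  map_add' x y := by
    rw [← (summable_indicator_basisCoeff_smul hb s x).tsum_add
      (summable_indicator_basisCoeff_smul hb s y)]
    simp only [map_add, Set.indicator_add', Pi.add_apply, add_smul]
  map_smul' r x := by
    rw [RingHom.id_apply, ← (summable_indicator_basisCoeff_smul hb s x).tsum_const_smul r]
    refine tsum_congr fun i => ?_
    by_cases hi : i ∈ s <;> simp [hi, mul_smul]

theorem hasSum_blockProj (s : Set ι) (x : X) :
    HasSum (fun i => s.indicator (basisCoeff hb x) i • b i) (blockProj hb s x) :=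
  (summable_indicator_basisCoeff_smul hb s x).hasSum

theorem suppIn_blockProj (s : Set ι) (x : X) : SuppIn b s (blockProj hb s x) :=
  ⟨_, fun _ hi => Set.indicator_of_notMem hi _, hasSum_blockProj hb s x⟩

theorem blockProj_eq_self {s : Set ι} {f : X} (hf : SuppIn b s f) : blockProj hb s f = f := by
  refine (hasSum_blockProj hb s f).unique ?_
  convert hasSum_basisCoeff hb f using 3 with i
  exact Set.indicator_apply_eq_self.mpr (hf.basisCoeff_eq_zero hb)

theorem blockProj_eq_zero {s t : Set ι} (hst : Disjoint s t) {f : X} (hf : SuppIn b t f) :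
    blockProj hb s f = 0 := by
  refine (hasSum_blockProj hb s f).unique ?_
  convert hasSum_zero using 2 with i
  rw [Set.indicator_apply_eq_zero.mpr fun hi => hf.basisCoeff_eq_zero hb
    (Set.disjoint_left.mp hst hi), zero_smul]

theorem hasSum_blockProj_fiber {κ : Type*} (e : ι → κ) (x : X) :
    HasSum (fun k => blockProj hb (e ⁻¹' {k}) x) x := by
  convert (hasSum_basisCoeff hb x).tsum_fiberwise e using 2 with k
  rw [tsum_subtype (e ⁻¹' {k}) fun i => basisCoeff hb x i • b i, Set.indicator_smul_left]
  rfl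

end BlockProjection

section BlockComparison

variable {X ι : Type*} [NormedAddCommGroup X] [NormedSpace ℝ X] {b : ι → X} {N : ℕ → Set ι}
  {C : ℝ}

def BlockComparison (b : ι → X) (N : ℕ → Set ι) (C : ℝ) : Prop :=
  ∀ f g : ℕ → X, (∀ n, SuppIn b (N n) (f n)) → (∀ n, SuppIn b (N n) (g n)) →
    (∀ n, ‖f n‖ ≤ ‖g n‖) → ∀ sf sg : X, HasSum f sf → HasSum g sg → ‖sf‖ ≤ C * ‖sg‖

open Finset

theorem BlockComparison.norm_sum_le (hC : BlockComparison b N C) {f g : ℕ → X}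
    (hf : ∀ n, SuppIn b (N n) (f n)) (hg : ∀ n, SuppIn b (N n) (g n))
    (hfg : ∀ n, ‖f n‖ ≤ ‖g n‖) (t : Finset ℕ) : ‖∑ n ∈ t, f n‖ ≤ C * ‖∑ n ∈ t, g n‖ := by
  have hsupp : ∀ h : ℕ → X, (∀ n, SuppIn b (N n) (h n)) →
      ∀ n, SuppIn b (N n) ((t : Set ℕ).indicator h n) := fun h hh n => by
    by_cases hn : n ∈ t <;> simp [hn, hh n, SuppIn.zero]
  refine hC _ _ (hsupp f hf) (hsupp g hg) (fun n => ?_) _ _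
    (hasSum_subtype_iff_indicator.mp (t.hasSum f)) (hasSum_subtype_iff_indicator.mp (t.hasSum g))
  by_cases hn : n ∈ t <;> simp [hn, hfg n]

theorem BlockComparison.cauchySeq_of_norm_le (hC : BlockComparison b N C) {w w' : ℕ → X}
    (hw : ∀ n, SuppIn b (N n) (w n)) (hw' : ∀ n, SuppIn b (N n) (w' n)) {K : ℝ}
    (hK : ∀ n, ‖w n‖ ≤ K * ‖w' n‖) {a : ℕ → ℝ}
    (h : CauchySeq fun M => ∑ n ∈ range M, a n • w' n) :
    CauchySeq fun M => ∑ n ∈ range M, a n • w n := by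
  refine cauchySeq_range_sum_of_norm_Ico_sum_le (C * |K|) (fun m M => ?_) h
  have hle : ∀ n, ‖a n • w n‖ ≤ ‖(|K| * a n) • w' n‖ := fun n => by
    rw [norm_smul, norm_smul, Real.norm_eq_abs, Real.norm_eq_abs, abs_mul, abs_abs, mul_comm |K|,
      mul_assoc]
    gcongr
    exact (hK n).trans (by gcongr; exact le_abs_self K)
  calc ‖∑ n ∈ Ico m M, a n • w n‖
      ≤ C * ‖∑ n ∈ Ico m M, (|K| * a n) • w' n‖ :=
        hC.norm_sum_le (fun n => (hw n).smul _) (fun n => (hw' n).smul _) hle _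
    _ = C * |K| * ‖∑ n ∈ Ico m M, a n • w' n‖ := by
        simp only [mul_smul, ← smul_sum, norm_smul, Real.norm_eq_abs, abs_abs, mul_assoc]

theorem BlockComparison.seqEquiv [CompleteSpace X] (hC : BlockComparison b N C) {u v : ℕ → X}
    (hu : ∀ n, SuppIn b (N n) (u n)) (hv : ∀ n, SuppIn b (N n) (v n)) {K : ℝ}
    (huv : ∀ n, ‖u n‖ ≤ K * ‖v n‖) (hvu : ∀ n, ‖v n‖ ≤ K * ‖u n‖) : SeqEquiv u v := fun _ => by
  simp only [← cauchy_map_iff_exists_tendsto]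
  exact ⟨hC.cauchySeq_of_norm_le hv hu hvu, hC.cauchySeq_of_norm_le hu hv huv⟩

end BlockComparison

theorem isComplementedSub_of_biorthogonal {X : Type*} [NormedAddCommGroup X] [NormedSpace ℝ X]
    {w : ℕ → X} (φ : ℕ → X →ₗ[ℝ] ℝ) (hφ_self : ∀ n, φ n (w n) = 1)
    (hφ_ne : ∀ m n, m ≠ n → φ n (w m) = 0) (hsum : ∀ x, Summable fun n => φ n x • w n)
    {C : ℝ} (hbound : ∀ x, ‖∑' n, φ n x • w n‖ ≤ C * ‖x‖) :
    IsComplementedSub (Submodule.span ℝ (Set.range w)).topologicalClosure := by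
  let P : X →ₗ[ℝ] X :=
    { toFun x := ∑' n, φ n x • w n
      map_add' x y := by
        simp only [map_add, add_smul]
        exact (hsum x).tsum_add (hsum y)
      map_smul' r x := by
        simp only [map_smul, smul_eq_mul, mul_smul, RingHom.id_apply]
        exact (hsum x).tsum_const_smul r }
  refine isComplementedSub_topologicalClosure_span (P.mkContinuous C hbound) ?_ fun x => ?_
  · rintro _ ⟨m, rfl⟩
    show ∑' n, φ n (w m) • w n = w m
    rw [tsum_eq_single m fun n hn => by rw [hφ_ne m n (Ne.symm hn), zero_smul], hφ_self,
      one_smul]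
  · exact mem_closure_of_tendsto (hsum x).hasSum (Eventually.of_forall fun t =>
      Submodule.sum_mem _ fun n _ => Submodule.smul_mem _ _ (Submodule.subset_span ⟨n, rfl⟩))

theorem BlockComparison.isComplementedSub {X ι : Type*} [NormedAddCommGroup X]
    [NormedSpace ℝ X] [CompleteSpace X] {b : ι → X}
    (hb : ∀ x : X, ∃! a : ι → ℝ, HasSum (fun i => a i • b i) x) {N : ℕ → Set ι}
    (hdisj : ∀ m n, m ≠ n → Disjoint (N m) (N n)) (hcover : ⋃ n, N n = Set.univ) {C : ℝ}
    (hC : BlockComparison b N C) {w : ℕ → X} (hw : ∀ n, SuppIn b (N n) (w n))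
    (hw0 : ∀ n, w n ≠ 0) :
    IsComplementedSub (Submodule.span ℝ (Set.range w)).topologicalClosure := by
  obtain ⟨e, he⟩ := exists_preimage_singleton_eq hdisj hcover
  have hdecomp : ∀ x, HasSum (fun n => blockProj hb (N n) x) x := fun x => by
    simpa only [he] using hasSum_blockProj_fiber hb e x
  choose ψ hψ_self hψ_le using fun n => exists_dual_apply_self_eq_one (𝕜 := ℝ) (hw0 n)
  let φ : ℕ → X →ₗ[ℝ] ℝ := fun n => (ψ n).toLinearMap ∘ₗ blockProj hb (N n)
  have hφ_supp : ∀ x n, SuppIn b (N n) (φ n x • w n) := fun x n => (hw n).smul _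
  have hφ_le : ∀ x n, ‖φ n x • w n‖ ≤ ‖blockProj hb (N n) x‖ := fun x n => hψ_le n _
  have hsum : ∀ x, Summable fun n => φ n x • w n := fun x =>
    summable_of_norm_finset_sum_le C
      (hC.norm_sum_le (hφ_supp x) (fun n => suppIn_blockProj hb _ x) (hφ_le x))
      (hdecomp x).summable
  have hbound : ∀ x, ‖∑' n, φ n x • w n‖ ≤ C * ‖x‖ := fun x =>
    hC _ _ (hφ_supp x) (fun n => suppIn_blockProj hb _ x) (hφ_le x) _ _ (hsum x).hasSum
      (hdecomp x)
  refine isComplementedSub_of_biorthogonal φ (fun n => ?_) (fun m n hmn => ?_) hsum hbound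
  · show ψ n (blockProj hb (N n) (w n)) = 1
    rw [blockProj_eq_self hb (hw n), hψ_self]
  · show ψ n (blockProj hb (N n) (w m)) = 0
    rw [blockProj_eq_zero hb (hdisj n m hmn.symm) (hw m), map_zero]

theorem stmt17_general {X ι : Type*} [NormedAddCommGroup X] [NormedSpace ℝ X] [CompleteSpace X]
    (b : ι → X) (hb : ∀ x : X, ∃! a : ι → ℝ, HasSum (fun i => a i • b i) x)
    (N : ℕ → Set ι)
    (hNdisj : ∀ m n, m ≠ n → Disjoint (N m) (N n)) (hNcover : (⋃ n, N n) = Set.univ)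
    (C : ℝ)
    (hC : ∀ f g : ℕ → X, (∀ n, SuppIn b (N n) (f n)) → (∀ n, SuppIn b (N n) (g n)) →
      (∀ n, ‖f n‖ ≤ ‖g n‖) → ∀ sf sg : X, HasSum f sf → HasSum g sg → ‖sf‖ ≤ C * ‖sg‖)
    (u v : ℕ → X) (hu : ∀ n, SuppIn b (N n) (u n)) (hv : ∀ n, SuppIn b (N n) (v n))
    (hsemi : ∃ c C' : ℝ, 0 < c ∧
      ∀ n, c ≤ ‖u n‖ ∧ ‖u n‖ ≤ C' ∧ c ≤ ‖v n‖ ∧ ‖v n‖ ≤ C') :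
    SeqEquiv u v ∧
    IsComplementedSub (Submodule.span ℝ (Set.range u)).topologicalClosure ∧
    IsComplementedSub (Submodule.span ℝ (Set.range v)).topologicalClosure := by
  obtain ⟨c, C', hc, hsn⟩ := hsemi
  have hC : BlockComparison b N C := hC
  have hC' : 0 ≤ C' := hc.le.trans ((hsn 0).1.trans (hsn 0).2.1)
  have hratio : ∀ {x y : ℝ}, x ≤ C' → c ≤ y → x ≤ C' / c * y := fun hx hy =>
    calc _ ≤ C' := hx
      _ = C' / c * c := (div_mul_cancel₀ C' hc.ne').symm
      _ ≤ C' / c * _ := mul_le_mul_of_nonneg_left hy (div_nonneg hC' hc.le)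
  refine ⟨hC.seqEquiv hu hv (fun n => hratio (hsn n).2.1 (hsn n).2.2.1)
      (fun n => hratio (hsn n).2.2.2 (hsn n).1),
    hC.isComplementedSub hb hNdisj hNcover hu fun n => norm_pos_iff.mp (hc.trans_le (hsn n).1),
    hC.isComplementedSub hb hNdisj hNcover hv fun n => norm_pos_iff.mp (hc.trans_le (hsn n).2.2.1)⟩

/-- Semi-normalized sequences supported along a fixed partition into finite sets are equivalent
and span complemented subspaces. -/
theorem stmt17 {X ι : Type*} [NormedAddCommGroup X] [NormedSpace ℝ X] [CompleteSpace X]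
    (b : ι → X) (hb : ∀ x : X, ∃! a : ι → ℝ, HasSum (fun i => a i • b i) x)
    (N : ℕ → Set ι) (hNfin : ∀ n, (N n).Finite)
    (hNdisj : ∀ m n, m ≠ n → Disjoint (N m) (N n)) (hNcover : (⋃ n, N n) = Set.univ)
    (C : ℝ)
    (hC : ∀ f g : ℕ → X, (∀ n, SuppIn b (N n) (f n)) → (∀ n, SuppIn b (N n) (g n)) →
      (∀ n, ‖f n‖ ≤ ‖g n‖) → ∀ sf sg : X, HasSum f sf → HasSum g sg → ‖sf‖ ≤ C * ‖sg‖)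
    (u v : ℕ → X) (hu : ∀ n, SuppIn b (N n) (u n)) (hv : ∀ n, SuppIn b (N n) (v n))
    (hsemi : ∃ c C' : ℝ, 0 < c ∧
      ∀ n, c ≤ ‖u n‖ ∧ ‖u n‖ ≤ C' ∧ c ≤ ‖v n‖ ∧ ‖v n‖ ≤ C') :
    SeqEquiv u v ∧
    IsComplementedSub (Submodule.span ℝ (Set.range u)).topologicalClosure ∧
    IsComplementedSub (Submodule.span ℝ (Set.range v)).topologicalClosure :=
  stmt17_general b hb N hNdisj hNcover C hC u v hu hv hsemi
end
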